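/- If (1 − x)/x = c₂(y − 1)/(c₁ y), then the map ξ : 𝔪 → 𝔥 defined by ξ((f₁(K₀) + P₁, −(c₂/c₁) f₂(K₀) + P₂)) = ((1 − x)/x) · (f₁(K₀), f₂(K₀)) (for K₀ ∈ 𝔨, P₁ ∈ 𝔭₁, P₂ ∈ 𝔭₂) is ℝ-linear, is ad(𝔥)-equivariant (ξ(⁅H, X⁆) = ⁅H, ξ(X)⁆ for all H ∈ 𝔥, X ∈ 𝔪), and satisfies ⁅ξ(X) + X, A(X)⁆ = 0 for all X ∈ 𝔪. -/

import Mathlib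

/-!
Since `f₁(𝔨)` and `𝔭₁` are complementary, `f₁ K₀ + P₁ ↦ K₀` is a linear map `π : 𝔤₁ → 𝔨`,
and `ξ = ((1 - x)/x) • (f₁, f₂) ∘ π ∘ fst`. It is `ad(𝔥)`-equivariant because `ad(f₁ 𝔨)`
preserves `𝔭₁`. In each factor `ξ(X) + X` and `A X` lie in the span of some `F = fᵢ K₀` and
`P = Pᵢ`, and `⁅a • F + P, b • F + t • P⁆ = (a t - b) • ⁅F, P⁆`. The coefficient vanishes in
`𝔤₁` by the choice of `(1 - x)/x`, and in `𝔤₂` by the relation between `x` and `y`.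
-/

namespace Submodule

variable {R K M : Type*} [Ring R] [AddCommGroup K] [Module R K] [AddCommGroup M] [Module R M]

theorem bijective_mkQ_comp_of_complement (f : K →ₗ[R] M) (p : Submodule R M)
    (hsum : ∀ a : M, ∃ Z : K, a - f Z ∈ p) (hint : ∀ Z : K, f Z ∈ p → Z = 0) :
    Function.Bijective (p.mkQ ∘ₗ f) := by
  refine ⟨(injective_iff_map_eq_zero _).2 fun Z hZ => hint Z ?_, fun a => ?_⟩
  · simpa using hZ
  · obtain ⟨a, rfl⟩ := p.mkQ_surjective a
    obtain ⟨Z, hZ⟩ := hsum a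
    exact ⟨Z, ((p.ker_mkQ ▸ p.mkQ.sub_mem_ker_iff).1 hZ).symm⟩

noncomputable def projAlong (f : K →ₗ[R] M) (p : Submodule R M)
    (hf : Function.Bijective (p.mkQ ∘ₗ f)) : M →ₗ[R] K :=
  (LinearEquiv.ofBijective _ hf).symm.toLinearMap ∘ₗ p.mkQ

theorem projAlong_apply_add (f : K →ₗ[R] M) (p : Submodule R M)
    (hf : Function.Bijective (p.mkQ ∘ₗ f)) (Z : K) {P : M} (hP : P ∈ p) :
    projAlong f p hf (f Z + P) = Z := by
  rw [projAlong, LinearMap.comp_apply, LinearEquiv.coe_coe, LinearEquiv.symm_apply_eq]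
  simpa using (Submodule.Quotient.mk_eq_zero p).2 hP

end Submodule

section Lie

variable {R L : Type*} [CommRing R] [LieRing L] [LieAlgebra R L]

theorem lie_smul_add_smul_add_smul (a b t : R) (F P : L) :
    ⁅a • F + P, b • F + t • P⁆ = (a * t - b) • ⁅F, P⁆ := by
  simp only [add_lie, lie_add, smul_lie, lie_smul, lie_self, smul_zero, add_zero, zero_add,
    ← lie_skew F P]
  module

end Lie

theorem statement7_general
    {k g1 g2 : Type*}
    [LieRing k] [LieAlgebra ℝ k]
    [LieRing g1] [LieAlgebra ℝ g1]
    [LieRing g2] [LieAlgebra ℝ g2]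
    (f1 : k →ₗ⁅ℝ⁆ g1) (f2 : k →ₗ⁅ℝ⁆ g2)
    (c1 c2 : ℝ)
    (p1 : Submodule ℝ g1)
    (p2 : Submodule ℝ g2)
    (hsum1 : ∀ a : g1, ∃ Z : k, a - f1 Z ∈ p1)
    (hint1 : ∀ Z : k, f1 Z ∈ p1 → Z = 0)
    (hlie1 : ∀ Z : k, ∀ P ∈ p1, ⁅f1 Z, P⁆ ∈ p1)
    (x y : ℝ) (hx : 0 < x) (hy : 0 < y)
    (h : (1 - x) / x = c2 * (y - 1) / (c1 * y)) :
    ∃ ξ : (g1 × g2) →ₗ[ℝ] g1 × g2,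
      (∀ (K0 : k), ∀ P1 ∈ p1, ∀ P2 ∈ p2,
        ξ (f1 K0 + P1, -(c2 / c1) • f2 K0 + P2) = ((1 - x) / x) • (f1 K0, f2 K0)) ∧
      (∀ (W K0 : k), ∀ P1 ∈ p1, ∀ P2 ∈ p2,
        ξ (⁅f1 W, f1 K0 + P1⁆, ⁅f2 W, -(c2 / c1) • f2 K0 + P2⁆) =
          (⁅f1 W, (ξ (f1 K0 + P1, -(c2 / c1) • f2 K0 + P2)).1⁆,
           ⁅f2 W, (ξ (f1 K0 + P1, -(c2 / c1) • f2 K0 + P2)).2⁆)) ∧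
      (∀ (K0 : k), ∀ P1 ∈ p1, ∀ P2 ∈ p2,
        ⁅(ξ (f1 K0 + P1, -(c2 / c1) • f2 K0 + P2)).1 + (f1 K0 + P1),
          f1 K0 + x • P1⁆ = 0 ∧
        ⁅(ξ (f1 K0 + P1, -(c2 / c1) • f2 K0 + P2)).2 + (-(c2 / c1) • f2 K0 + P2),
          -(c2 / c1) • f2 K0 + y • P2⁆ = 0) := by
  set lam := (1 - x) / x
  let π := Submodule.projAlong (f1 : k →ₗ[ℝ] g1) p1
    (Submodule.bijective_mkQ_comp_of_complement _ p1 hsum1 hint1)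
  let ξ : g1 × g2 →ₗ[ℝ] g1 × g2 :=
    lam • ((f1 : k →ₗ[ℝ] g1).prod (f2 : k →ₗ[ℝ] g2) ∘ₗ π ∘ₗ LinearMap.fst ℝ g1 g2)
  have hξ (K0 : k) {P1 : g1} (hP1 : P1 ∈ p1) (P2 : g2) :
      ξ (f1 K0 + P1, P2) = lam • (f1 K0, f2 K0) := by
    have hπ : π (f1 K0 + P1) = K0 := Submodule.projAlong_apply_add _ p1 _ K0 hP1
    simp [ξ, hπ]
  have hx1 : (lam + 1) * x - 1 = 0 := by
    simp only [lam]; field_simp; ring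
  have hy2 : (lam - c2 / c1) * y - -(c2 / c1) = 0 := by
    rw [h]; field_simp; ring
  refine ⟨ξ, fun K0 P1 hP1 P2 _ => hξ K0 hP1 _, fun W K0 P1 hP1 P2 _ => ?_,
    fun K0 P1 hP1 P2 _ => ?_⟩
  · have hbr : ⁅f1 W, f1 K0 + P1⁆ = f1 ⁅W, K0⁆ + ⁅f1 W, P1⁆ := by
      rw [lie_add, LieHom.map_lie]
    rw [hbr, hξ _ (hlie1 W P1 hP1), hξ K0 hP1]
    simp
  · rw [hξ K0 hP1, Prod.smul_fst, Prod.smul_snd]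
    constructor
    · calc ⁅lam • f1 K0 + (f1 K0 + P1), f1 K0 + x • P1⁆
          = ⁅(lam + 1) • f1 K0 + P1, (1 : ℝ) • f1 K0 + x • P1⁆ := by congr 1 <;> module
        _ = 0 := by rw [lie_smul_add_smul_add_smul, hx1, zero_smul]
    · calc ⁅lam • f2 K0 + (-(c2 / c1) • f2 K0 + P2), -(c2 / c1) • f2 K0 + y • P2⁆
          = ⁅(lam - c2 / c1) • f2 K0 + P2, -(c2 / c1) • f2 K0 + y • P2⁆ := by congr 1; module
        _ = 0 := by rw [lie_smul_add_smul_add_smul, hy2, zero_smul]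

/-- If `(1 − x)/x = c₂(y − 1)/(c₁ y)`, then the map `ξ : 𝔪 → 𝔥` given on
`X = (f₁ K₀ + P₁, −(c₂/c₁)·f₂ K₀ + P₂)` by `ξ(X) = ((1 − x)/x)·(f₁ K₀, f₂ K₀)` is ℝ-linear,
`ad(𝔥)`-equivariant, and satisfies `⁅ξ(X) + X, A X⁆ = 0` for all `X ∈ 𝔪` (brackets in
`𝔤₁ ⊕ 𝔤₂` are taken componentwise; `A` is the identity on `𝔪₀`, `x·id` on `𝔪₁` and
`y·id` on `𝔪₂`). -/
theorem statement7
    {k g1 g2 : Type*}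
    [LieRing k] [LieAlgebra ℝ k] [Module.Finite ℝ k] [LieAlgebra.IsSemisimple ℝ k]
    [LieRing g1] [LieAlgebra ℝ g1] [Module.Finite ℝ g1] [LieAlgebra.IsSemisimple ℝ g1]
    [LieRing g2] [LieAlgebra ℝ g2] [Module.Finite ℝ g2] [LieAlgebra.IsSemisimple ℝ g2]
    (f1 : k →ₗ⁅ℝ⁆ g1) (f2 : k →ₗ⁅ℝ⁆ g2)
    (hf1 : Function.Injective f1) (hf2 : Function.Injective f2)
    (c1 c2 : ℝ) (hc1 : 0 < c1) (hc2 : 0 < c2)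
    (hB1 : ∀ Z W : k, killingForm ℝ k Z W = c1 * killingForm ℝ g1 (f1 Z) (f1 W))
    (hB2 : ∀ Z W : k, killingForm ℝ k Z W = c2 * killingForm ℝ g2 (f2 Z) (f2 W))
    (p1 : Submodule ℝ g1) (hp1 : ∀ P : g1, P ∈ p1 ↔ ∀ Z : k, killingForm ℝ g1 P (f1 Z) = 0)
    (p2 : Submodule ℝ g2) (hp2 : ∀ P : g2, P ∈ p2 ↔ ∀ Z : k, killingForm ℝ g2 P (f2 Z) = 0)
    (hsum1 : ∀ a : g1, ∃ Z : k, a - f1 Z ∈ p1)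
    (hsum2 : ∀ a : g2, ∃ Z : k, a - f2 Z ∈ p2)
    (hint1 : ∀ Z : k, f1 Z ∈ p1 → Z = 0)
    (hint2 : ∀ Z : k, f2 Z ∈ p2 → Z = 0)
    (hlie1 : ∀ Z : k, ∀ P ∈ p1, ⁅f1 Z, P⁆ ∈ p1)
    (hlie2 : ∀ Z : k, ∀ P ∈ p2, ⁅f2 Z, P⁆ ∈ p2)
    (x y : ℝ) (hx : 0 < x) (hy : 0 < y)
    (h : (1 - x) / x = c2 * (y - 1) / (c1 * y)) :
    ∃ ξ : (g1 × g2) →ₗ[ℝ] g1 × g2,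
      (∀ (K0 : k), ∀ P1 ∈ p1, ∀ P2 ∈ p2,
        ξ (f1 K0 + P1, -(c2 / c1) • f2 K0 + P2) = ((1 - x) / x) • (f1 K0, f2 K0)) ∧
      (∀ (W K0 : k), ∀ P1 ∈ p1, ∀ P2 ∈ p2,
        ξ (⁅f1 W, f1 K0 + P1⁆, ⁅f2 W, -(c2 / c1) • f2 K0 + P2⁆) =
          (⁅f1 W, (ξ (f1 K0 + P1, -(c2 / c1) • f2 K0 + P2)).1⁆,
           ⁅f2 W, (ξ (f1 K0 + P1, -(c2 / c1) • f2 K0 + P2)).2⁆)) ∧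
      (∀ (K0 : k), ∀ P1 ∈ p1, ∀ P2 ∈ p2,
        ⁅(ξ (f1 K0 + P1, -(c2 / c1) • f2 K0 + P2)).1 + (f1 K0 + P1),
          f1 K0 + x • P1⁆ = 0 ∧
        ⁅(ξ (f1 K0 + P1, -(c2 / c1) • f2 K0 + P2)).2 + (-(c2 / c1) • f2 K0 + P2),
          -(c2 / c1) • f2 K0 + y • P2⁆ = 0) :=
  statement7_general f1 f2 c1 c2 p1 p2 hsum1 hint1 hlie1 x y hx hy h
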